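/- There is a universal constant c₀ > 0 such that for every constant exponent a ≥ 1 the following holds for all n ≥ 2 with identifier range M = n^a: there exist a finite certificate set C with |C| ≤ 2^(c₀ · a · n) and a verification algorithm A : Fin M → Finset (Fin M) → C → Bool such that for every finite simple graph G on a vertex set V with |V| = n and every injective identifier assignment Id : V → Fin M: there exists c ∈ C with A (Id u) ({Id v : v ∈ N(u)}) c = true for every vertex u ∈ V, if and only if G is bipartite. (In particular, when the identifier range is polynomial in n, bipartiteness has a global certification scheme of size O(n), refuting the conjecture that Θ(n log n) is optimal.) -/

import Mathlib

/-!
A certificate is an index into a fixed family `t : Fin N → Fin M → Fin 2` that is `n`-universal: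
on every set of `n` identifiers its members realise all `2ⁿ` patterns. A vertex accepts the index
`i` when `t i` separates its identifier from those of its neighbours, so an accepted index yields
the 2-colouring `t i ∘ Id`, and conversely every 2-colouring of the `n` identifiers in use is
realised by some `t i`. A union bound over the `C(M, n) 2ⁿ` patterns shows that a family of
`N = 2ⁿ K` functions is universal as soon as `C(M, n) 2ⁿ < 2ᴷ`, because each pattern is missed by
one function with probability `1 - 2⁻ⁿ` and `(1 - 2⁻ⁿ)^(2ⁿ) ≤ 1/2`. For `M = nᵃ` one can take
`K = n (1 + a n)`, and then `N ≤ 2^(3 a n)`.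
-/

open Finset

theorem two_mul_pow_succ_le_succ_pow_succ (k : ℕ) : 2 * k ^ (k + 1) ≤ (k + 1) ^ (k + 1) := by
  rcases Nat.eq_zero_or_pos k with rfl | hk
  · simp
  have bernoulli := pow_add_mul_le_add_pow (a := k) (b := 1) (Nat.zero_le k) (by positivity) k
  have hpow : k * k ^ (k - 1) = k ^ k := by rw [← pow_succ', Nat.sub_add_cancel hk]
  calc 2 * k ^ (k + 1) = k * (k ^ k + k * k ^ (k - 1) * 1) := by rw [mul_one, hpow]; ring
    _ ≤ (k + 1) * (k + 1) ^ k := Nat.mul_le_mul (Nat.le_succ k) bernoulli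
    _ = (k + 1) ^ (k + 1) := (pow_succ' _ _).symm

/-- `(1 - 1/m) ^ (m K) ≤ 2⁻ᴷ`, cleared of denominators. -/
theorem two_pow_mul_sub_one_pow_le (m K : ℕ) (hm : 1 ≤ m) :
    2 ^ K * (m - 1) ^ (m * K) ≤ m ^ (m * K) := by
  obtain ⟨k, rfl⟩ : ∃ k, m = k + 1 := ⟨m - 1, by omega⟩
  simpa only [Nat.add_sub_cancel, pow_mul, mul_pow] using
    Nat.pow_le_pow_left (two_mul_pow_succ_le_succ_pow_succ k) K

theorem choose_mul_pow_mul_sub_pow_lt_pow {M n b K : ℕ} (hb : 1 ≤ b)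
    (hK : M.choose n * b ^ n < 2 ^ K) :
    M.choose n * b ^ n * (b ^ M - b ^ (M - n)) ^ (b ^ n * K) < b ^ (M * (b ^ n * K)) := by
  rcases lt_or_ge M n with hMn | hnM
  · simp only [Nat.choose_eq_zero_of_lt hMn, zero_mul]
    positivity
  set P := M.choose n * b ^ n
  set m := b ^ n
  have hm : 1 ≤ m := Nat.one_le_pow _ _ hb
  have hsplit : b ^ M - b ^ (M - n) = b ^ (M - n) * (m - 1) := by
    rw [Nat.mul_sub, mul_one, ← pow_add, Nat.sub_add_cancel hnM]
  have hkey : P * (m - 1) ^ (m * K) < m ^ (m * K) := by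
    rcases Nat.eq_zero_or_pos ((m - 1) ^ (m * K)) with h0 | hpos
    · rw [h0, mul_zero]
      positivity
    · exact (Nat.mul_lt_mul_of_pos_right hK hpos).trans_le (two_pow_mul_sub_one_pow_le m K hm)
  calc P * (b ^ M - b ^ (M - n)) ^ (m * K)
      = b ^ ((M - n) * (m * K)) * (P * (m - 1) ^ (m * K)) := by
        rw [hsplit, mul_pow, pow_mul]; ring
    _ < b ^ ((M - n) * (m * K)) * m ^ (m * K) :=
        Nat.mul_lt_mul_of_pos_left hkey (by positivity)
    _ = b ^ (M * (m * K)) := by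
        rw [← pow_mul, ← pow_add, ← add_mul, Nat.sub_add_cancel hnM]

section UniversalFamily

variable {α β ι : Type*}

def IsUniversalFamily (n : ℕ) (t : ι → α → β) : Prop :=
  ∀ S : Finset α, #S = n → ∀ φ : α → β, ∃ i, ∀ j ∈ S, t i j = φ j

theorem card_filter_forall_mem_eq [Fintype α] [DecidableEq α] [Fintype β] [DecidableEq β]
    (S : Finset α) (φ : α → β) :
    #{f : α → β | ∀ j ∈ S, f j = φ j} = Fintype.card β ^ #Sᶜ := by
  have hpi : ({f : α → β | ∀ j ∈ S, f j = φ j} : Finset (α → β)) =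
      Fintype.piFinset fun j => if j ∈ S then {φ j} else univ := by
    ext f
    simp only [mem_filter, mem_univ, true_and, Fintype.mem_piFinset]
    refine forall_congr' fun j => ?_
    split_ifs with hj <;> simp [hj]
  rw [hpi, Fintype.card_piFinset]
  simp only [apply_ite card, card_singleton, card_univ]
  rw [prod_ite, prod_const_one, one_mul, prod_const, filter_not, filter_mem_eq_inter, univ_inter,
    compl_eq_univ_sdiff]

theorem card_filter_not_forall_mem_eq [Fintype α] [DecidableEq α] [Fintype β] [DecidableEq β]
    (S : Finset α) (φ : α → β) :
    #{f : α → β | ¬ ∀ j ∈ S, f j = φ j} =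
      Fintype.card β ^ Fintype.card α - Fintype.card β ^ #Sᶜ := by
  rw [filter_not, card_sdiff_of_subset (filter_subset _ _), card_filter_forall_mem_eq, card_univ,
    Fintype.card_fun]

theorem exists_isUniversalFamily [Fintype α] [DecidableEq α] [Fintype β] [DecidableEq β]
    [Nonempty β] {n K : ℕ} (hK : (Fintype.card α).choose n * Fintype.card β ^ n < 2 ^ K) :
    ∃ t : Fin (Fintype.card β ^ n * K) → α → β, IsUniversalFamily n t := by
  set M := Fintype.card α
  set b := Fintype.card β
  set N := b ^ n * K
  obtain ⟨b₀⟩ := ‹Nonempty β›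
  by_contra! hbad
  simp only [IsUniversalFamily, not_forall, not_exists] at hbad
  -- a pattern on `S` is represented by its unique extension that is `b₀` off `S`
  let patterns : Finset (Σ _ : Finset α, α → β) :=
    (univ.powersetCard n).sigma fun S => {ψ | ∀ j ∈ Sᶜ, ψ j = b₀}
  let missing (p : Σ _ : Finset α, α → β) : Finset (Fin N → α → β) :=
    Fintype.piFinset fun _ => {f | ¬ ∀ j ∈ p.1, f j = p.2 j}
  have hcover : (univ : Finset (Fin N → α → β)) ⊆ patterns.biUnion missing := by
    intro t _
    obtain ⟨S, hS, φ, hφ⟩ := hbad t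
    refine mem_biUnion.mpr ⟨⟨S, S.piecewise φ fun _ => b₀⟩, ?_, ?_⟩
    · simp only [patterns, mem_sigma, mem_powersetCard_univ, mem_filter, mem_univ, true_and]
      exact ⟨hS, fun j hj => piecewise_eq_of_notMem _ _ _ (mem_compl.mp hj)⟩
    · simp only [missing, Fintype.mem_piFinset, mem_filter, mem_univ, true_and]
      intro i hagree
      obtain ⟨j, hj, hne⟩ := hφ i
      exact hne ((hagree j hj).trans (piecewise_eq_of_mem _ _ _ hj))
  have hpatterns : #patterns = M.choose n * b ^ n := by
    rw [card_sigma, sum_congr rfl fun S hS => ?_, sum_const, smul_eq_mul, card_powersetCard,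
      card_univ]
    rw [card_filter_forall_mem_eq, compl_compl, mem_powersetCard_univ.mp hS]
  have hmissing : ∀ p ∈ patterns, #(missing p) = (b ^ M - b ^ (M - n)) ^ N := by
    intro p hp
    have hcard : #p.1 = n := mem_powersetCard_univ.mp (mem_sigma.mp hp).1
    rw [Fintype.card_piFinset_const, card_filter_not_forall_mem_eq, card_compl, hcard]
  have hunion := calc
    b ^ (M * N) = #(univ : Finset (Fin N → α → β)) := by simp [pow_mul, M, b]
    _ ≤ ∑ p ∈ patterns, #(missing p) := (card_le_card hcover).trans card_biUnion_le
    _ = M.choose n * b ^ n * (b ^ M - b ^ (M - n)) ^ N := by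
      rw [sum_congr rfl hmissing, sum_const, smul_eq_mul, hpatterns]
  exact (choose_mul_pow_mul_sub_pow_lt_pow Fintype.card_pos hK).not_ge hunion

def properColoringVerifier [DecidableEq β] (t : ι → α → β) (x : α) (S : Finset α) (i : ι) :
    Bool :=
  decide (∀ y ∈ S, t i y ≠ t i x)

theorem exists_forall_properColoringVerifier_iff [DecidableEq α] [DecidableEq β] [Nonempty β]
    {n : ℕ} {t : ι → α → β} (ht : IsUniversalFamily n t) {V : Type*} [Fintype V]
    (G : SimpleGraph V) [DecidableRel G.Adj] (hV : Fintype.card V = n) {ident : V → α}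
    (hident : Function.Injective ident) :
    (∃ i, ∀ u, properColoringVerifier t (ident u) ((G.neighborFinset u).image ident) i = true) ↔
      ∃ φ : V → β, ∀ u v, G.Adj u v → φ u ≠ φ v := by
  constructor
  · rintro ⟨i, hi⟩
    refine ⟨fun u => t i (ident u), fun u v huv => Ne.symm ?_⟩
    exact of_decide_eq_true (hi u) _ (mem_image_of_mem ident ((G.mem_neighborFinset u v).mpr huv))
  · rintro ⟨φ, hφ⟩
    obtain ⟨i, hi⟩ := ht (univ.image ident)
      (by rw [card_image_of_injective _ hident, card_univ, hV])
      (Function.extend ident φ fun _ => Classical.arbitrary β)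
    have hcolor (v : V) : t i (ident v) = φ v :=
      (hi _ (mem_image_of_mem _ (mem_univ v))).trans (hident.extend_apply _ _ v)
    refine ⟨i, fun u => decide_eq_true ?_⟩
    simp only [mem_image, SimpleGraph.mem_neighborFinset]
    rintro _ ⟨v, huv, rfl⟩
    rw [hcolor, hcolor]
    exact (hφ u v huv).symm

end UniversalFamily

theorem choose_pow_mul_two_pow_lt {a n : ℕ} (ha : 1 ≤ a) (hn : 1 ≤ n) :
    (n ^ a).choose n * 2 ^ n < 2 ^ (n * (1 + a * n)) := by
  have hid : n ^ a < 2 ^ (a * n) := by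
    rw [mul_comm, pow_mul]
    exact Nat.pow_lt_pow_left n.lt_two_pow_self (by omega)
  calc (n ^ a).choose n * 2 ^ n ≤ (2 * n ^ a) ^ n := by
        rw [mul_pow, mul_comm]; exact Nat.mul_le_mul_left _ (Nat.choose_le_pow _ _)
    _ < (2 ^ (1 + a * n)) ^ n := Nat.pow_lt_pow_left (by rw [pow_add]; omega) (by omega)
    _ = 2 ^ (n * (1 + a * n)) := by rw [← pow_mul, mul_comm]

theorem two_pow_mul_le_two_pow {a n : ℕ} (ha : 1 ≤ a) :
    2 ^ n * (n * (1 + a * n)) ≤ 2 ^ (3 * a * n) := by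
  calc 2 ^ n * (n * (1 + a * n)) ≤ 2 ^ n * (2 ^ n * 2 ^ (a * n)) :=
        Nat.mul_le_mul_left _ (Nat.mul_le_mul n.lt_two_pow_self.le
          (by have := (a * n).lt_two_pow_self; omega))
    _ = 2 ^ (n + n + a * n) := by rw [pow_add, pow_add, mul_assoc]
    _ ≤ 2 ^ (3 * a * n) := Nat.pow_le_pow_right (by norm_num) (by nlinarith)

/-- When the identifier range is polynomial, `M = n^a`, bipartiteness has a global
certification scheme of size `O(n)` (with the constant depending linearly on `a`),
refuting the conjecture that `Θ(n log n)` is optimal. -/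
theorem global_certification_bipartiteness_poly_ids :
    ∃ c₀ : ℝ, 0 < c₀ ∧
      ∀ (a : ℕ), 1 ≤ a → ∀ (n : ℕ), 2 ≤ n → ∀ (M : ℕ), M = n ^ a →
        ∃ (C : Type) (instC : Fintype C) (A : Fin M → Finset (Fin M) → C → Bool),
          (@Fintype.card C instC : ℝ) ≤ 2 ^ (c₀ * (a : ℝ) * (n : ℝ)) ∧
          ∀ (V : Type) [Fintype V] [DecidableEq V] (G : SimpleGraph V) [DecidableRel G.Adj],
            Fintype.card V = n →
            ∀ Id : V → Fin M, Function.Injective Id →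
              ((∃ c : C, ∀ u : V, A (Id u) ((G.neighborFinset u).image Id) c = true) ↔
                ∃ φ : V → Fin 2, ∀ u v : V, G.Adj u v → φ u ≠ φ v) := by
  refine ⟨3, by norm_num, fun a ha n hn M hM => ?_⟩
  subst hM
  obtain ⟨t, ht⟩ := exists_isUniversalFamily (α := Fin (n ^ a)) (β := Fin 2)
    (K := n * (1 + a * n)) (by simpa using choose_pow_mul_two_pow_lt ha (by omega))
  refine ⟨_, inferInstance, properColoringVerifier t, ?_,
    fun V _ _ G _ hV Id hId => exists_forall_properColoringVerifier_iff ht G hV hId⟩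
  rw [Fintype.card_fin, Fintype.card_fin,
    show (3 : ℝ) * a * n = (3 * a * n : ℕ) by push_cast; ring, Real.rpow_natCast]
  exact_mod_cast two_pow_mul_le_two_pow (n := n) ha
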